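/- arXiv:2004.14292 — 6 statements merged into one kernel-verified Lean document; each statement's English description precedes it below -/
import Mathlib

section
/- Let H be a complex inner product space, G a group, and ψ : G → H a family of unit vectors (‖ψ(g)‖ = 1 for all g) such that distinct group elements label non-proportional states (if ψ(g) = c • ψ(h) for some scalar c ∈ ℂ, then g = h). Assume the inner products are invariant under left and right translation of the labels: ⟨ψ(k·g), ψ(k·h)⟩ = ⟨ψ(g), ψ(h)⟩ and ⟨ψ(g·k), ψ(h·k)⟩ = ⟨ψ(g), ψ(h)⟩ for all g, h, k ∈ G. If the change of quantum reference frame preserves inner products of three-system product states, i.e. ⟨ψ(g), ψ(h)⟩ = (⟨ψ(g⁻¹), ψ(h⁻¹)⟩)² for all g, h ∈ G, then the states {ψ(g)} are orthonormal: ⟨ψ(g), ψ(h)⟩ = 0 whenever g ≠ h. -/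
open scoped ComplexInnerProductSpace

/-- If the change of quantum reference frame preserves inner products of
three-system product states, then the frame states are orthonormal. -/
theorem orthonormality_of_unitary_frame_change
    {H : Type*} [NormedAddCommGroup H] [InnerProductSpace ℂ H]
    {G : Type*} [Group G] (ψ : G → H)
    (hnorm : ∀ g : G, ‖ψ g‖ = 1)
    (hinj : ∀ (g h : G) (c : ℂ), ψ g = c • ψ h → g = h)
    (hleft : ∀ k g h : G, ⟪ψ (k * g), ψ (k * h)⟫ = ⟪ψ g, ψ h⟫)
    (hright : ∀ k g h : G, ⟪ψ (g * k), ψ (h * k)⟫ = ⟪ψ g, ψ h⟫)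
    (hunit : ∀ g h : G, ⟪ψ g, ψ h⟫ = (⟪ψ g⁻¹, ψ h⁻¹⟫) ^ 2) :
    ∀ g h : G, g ≠ h → ⟪ψ g, ψ h⟫ = 0 := by
  intro g h hgh
  by_contra hz
  -- ⟪ψ g⁻¹, ψ h⁻¹⟫ = ⟪ψ h, ψ g⟫
  have h1 : ⟪ψ (h * g⁻¹), ψ (h * h⁻¹)⟫ = ⟪ψ g⁻¹, ψ h⁻¹⟫ := hleft h g⁻¹ h⁻¹
  have h2 : ⟪ψ (h * g⁻¹ * g), ψ (1 * g)⟫ = ⟪ψ (h * g⁻¹), ψ 1⟫ := hright g (h * g⁻¹) 1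
  have h3 : ⟪ψ g⁻¹, ψ h⁻¹⟫ = ⟪ψ h, ψ g⟫ := by
    rw [← h1]
    simp only [mul_inv_cancel] at *
    rw [← h2]
    simp [mul_assoc]
  have hconj : ⟪ψ g⁻¹, ψ h⁻¹⟫ = (starRingEnd ℂ) ⟪ψ g, ψ h⟫ := by
    rw [h3, ← inner_conj_symm]
  have key : ⟪ψ g, ψ h⟫ = ((starRingEnd ℂ) ⟪ψ g, ψ h⟫) ^ 2 := by
    have := hunit g h; rw [hconj] at this; exact this
  have hnormsq : ‖⟪ψ g, ψ h⟫‖ = ‖⟪ψ g, ψ h⟫‖ ^ 2 := by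
    calc ‖⟪ψ g, ψ h⟫‖ = ‖((starRingEnd ℂ) ⟪ψ g, ψ h⟫) ^ 2‖ := by rw [← key]
      _ = ‖⟪ψ g, ψ h⟫‖ ^ 2 := by rw [norm_pow, RCLike.norm_conj]
  have hne : ‖⟪ψ g, ψ h⟫‖ ≠ 0 := by simpa using hz
  have hone : ‖⟪ψ g, ψ h⟫‖ = 1 := by
    have hp : (0:ℝ) < ‖⟪ψ g, ψ h⟫‖ := lt_of_le_of_ne (norm_nonneg _) (Ne.symm hne)
    nlinarith [hnormsq]
  have hx : ψ g ≠ 0 := fun hc => by simpa [hc] using hnorm g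
  have hy : ψ h ≠ 0 := fun hc => by simpa [hc] using hnorm h
  have : ‖⟪ψ g, ψ h⟫‖ = ‖ψ g‖ * ‖ψ h‖ := by rw [hone, hnorm, hnorm, mul_one]
  obtain ⟨r, hr0, hr⟩ := (norm_inner_eq_norm_iff hx hy).mp this
  exact hgh ((hinj h g r hr).symm)
end

section
/- Lemma 3 (transitivity of changes of reference frame): Let G be a finite group, n ≥ 3, and i, j, k pairwise distinct indices in {0,…,n−1}. Then the composition of the change of reference frame from k to i followed by the change from i to j equals the direct change from k to j: U^{i→j} · U^{k→i} = U^{k→j} (matrix product). -/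
/-- The classical change-of-reference-frame map `σ^{a→b}` on configurations. -/
def chgFrame {G : Type*} [Group G] {n : ℕ} (a b : Fin n) (f : Fin n → G) : Fin n → G :=
  fun k => if k = b then f a else if k = a then (f b)⁻¹ else f k * (f b)⁻¹

/-- The matrix of the change of quantum reference frame operator `U^{a→b}`
in the product basis of `L²(G)^{⊗n}` for finite `G`. -/
def chgFrameMatrix (G : Type*) [Group G] [Fintype G] [DecidableEq G] {n : ℕ}
    (a b : Fin n) : Matrix (Fin n → G) (Fin n → G) ℂ :=
  fun f f' => if f = chgFrame a b f' then 1 else 0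

lemma chgFrame_trans {G : Type*} [Group G] {n : ℕ} (i j k : Fin n)
    (hij : i ≠ j) (hjk : j ≠ k) (hik : i ≠ k) (f : Fin n → G) :
    chgFrame i j (chgFrame k i f) = chgFrame k j f := by
  funext m
  simp only [chgFrame]
  by_cases hmj : m = j
  · simp [hmj, hij.symm, hjk, hik.symm]
  · by_cases hmi : m = i
    · simp [hmi, hmj, hij, hij.symm, hjk, hik, hik.symm]
    · by_cases hmk : m = k
      · simp [hmk, hmj, hmi, hij.symm, hjk, hjk.symm, hik.symm, mul_inv_rev]
      · simp [hmj, hmi, hmk, hij.symm, hjk, hik.symm, mul_inv_rev, mul_assoc]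

/-- Lemma 3: transitivity of changes of quantum reference frame,
`U^{i→j} · U^{k→i} = U^{k→j}`. -/
theorem chgFrameMatrix_trans (G : Type*) [Group G] [Fintype G] [DecidableEq G]
    {n : ℕ} (hn : 3 ≤ n) (i j k : Fin n) (hij : i ≠ j) (hjk : j ≠ k) (hik : i ≠ k) :
    chgFrameMatrix G i j * chgFrameMatrix G k i = chgFrameMatrix G k j := by
  ext f f'
  simp only [Matrix.mul_apply, chgFrameMatrix, mul_ite, mul_one, mul_zero, ite_mul,
    one_mul, zero_mul]
  rw [Finset.sum_eq_single (chgFrame k i f')]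
  · simp [chgFrame_trans i j k hij hjk hik]
  · intro g _ hg
    simp [hg]
  · intro h
    exact absurd (Finset.mem_univ _) h
end

section
/- Theorem 2, inconsistency part: There exist groups N and P, a group homomorphism φ : P → Aut(N), elements g₀ and g of the semidirect product G = N ⋊_φ P, and an element n_j ∈ N (regarded as an element of G via the canonical inclusion), such that T(g · g₀⁻¹) · (T(n_j · g₀⁻¹))⁻¹ ≠ T(g) · n_j⁻¹. That is, for a system whose configuration has a nontrivial P-component, the relative state relative to an N-system obtained by first changing reference frame in G and then truncating differs from the one obtained by first truncating and then changing reference frame in N. -/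
/-- Theorem 2, inconsistency part: for semidirect products the truncation method of
obtaining relative states is in general inconsistent — there is a semidirect product
`G = N ⋊[φ] P`, elements `g₀ g : G` and `n_j ∈ N` such that relativizing in `G` and then
truncating differs from truncating and then relativizing in `N`. -/
theorem truncation_inconsistent :
    ∃ (N P : Type) (_ : Group N) (_ : Group P) (φ : P →* MulAut N)
      (g₀ g : N ⋊[φ] P) (nj : N),
      (g * g₀⁻¹).left * ((SemidirectProduct.inl nj * g₀⁻¹ : N ⋊[φ] P).left)⁻¹ ≠
        g.left * nj⁻¹ := by
  refine ⟨Multiplicative (ZMod 3), Multiplicative ℤ, inferInstance, inferInstance,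
    zpowersHom _ (MulEquiv.inv (Multiplicative (ZMod 3))),
    SemidirectProduct.inl (Multiplicative.ofAdd 1),
    SemidirectProduct.inr (Multiplicative.ofAdd 1), 1, ?_⟩
  simp [SemidirectProduct.mul_left, SemidirectProduct.inv_left, zpowersHom_apply]
  decide
end

section
/- No linear change of reference frame for rebits: For θ ∈ ℝ let u(θ) ∈ ℝ² be the vector with components u(θ)(0) = cos(θ/2) and u(θ)(1) = sin(θ/2). For θ, θ′ ∈ ℝ define the three-rebit product vectors Ψ(θ, θ′), Φ(θ, θ′) : {0,1}³ → ℝ by Ψ(θ, θ′)(i, j, k) = u(0)(i) · u(θ)(j) · u(θ′)(k) and Φ(θ, θ′)(i, j, k) = u(−θ)(i) · u(0)(j) · u(θ′ − θ)(k). Then there exists no ℝ-linear map U on the 8-dimensional real vector space of functions {0,1}³ → ℝ such that U(Ψ(θ, θ′)) = Φ(θ, θ′) for all θ, θ′ ∈ ℝ. -/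
/-- The rebit state vector `u(θ) = (cos(θ/2), sin(θ/2))`. -/
noncomputable def rebit (θ : ℝ) : Fin 2 → ℝ :=
  ![Real.cos (θ / 2), Real.sin (θ / 2)]

/-- The three-rebit product state relative to `A`. -/
noncomputable def rebitIn (θ θ' : ℝ) : Fin 2 × Fin 2 × Fin 2 → ℝ :=
  fun p => rebit 0 p.1 * rebit θ p.2.1 * rebit θ' p.2.2

/-- The intended three-rebit product state relative to `B`. -/
noncomputable def rebitOut (θ θ' : ℝ) : Fin 2 × Fin 2 × Fin 2 → ℝ :=
  fun p => rebit (-θ) p.1 * rebit 0 p.2.1 * rebit (θ' - θ) p.2.2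

/-- No linear change of reference frame for rebits: there is no `ℝ`-linear map sending
every input product state `Ψ(θ, θ′)` to the corresponding output state `Φ(θ, θ′)`. -/
theorem no_linear_rebit_frame_change :
    ¬ ∃ U : (Fin 2 × Fin 2 × Fin 2 → ℝ) →ₗ[ℝ] (Fin 2 × Fin 2 × Fin 2 → ℝ),
        ∀ θ θ' : ℝ, U (rebitIn θ θ') = rebitOut θ θ' := by
  rintro ⟨U, h⟩
  have key : rebitIn (2 * Real.pi) 0 = -(rebitIn 0 0) := by
    funext p
    simp only [rebitIn, rebit, Pi.neg_apply]
    norm_num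
    fin_cases p <;> simp
  have h1 := h 0 0
  have h2 := h (2 * Real.pi) 0
  rw [key, map_neg, h1] at h2
  have := congrFun h2 (0, 0, 0)
  simp only [rebitOut, rebit, Pi.neg_apply] at this
  norm_num at this
  rw [show -(2 * Real.pi) / 2 = -Real.pi by ring, Real.cos_neg, Real.cos_pi] at this
  norm_num at this
end

section
/- Frame-dependence of entanglement for ℤ/2: Let V be the complex vector space of functions (ℤ/2) × (ℤ/2) → ℂ with standard basis e_{(g,h)}, and let U be the linear map determined on the basis by U e_{(g,h)} = e_{(−g, h−g)} (the change of quantum reference frame from A to B for the symmetry group ℤ/2, the two slots holding the states of the described systems). Then U(e_{(0,1)} + e_{(1,1)}) = e_{(0,1)} + e_{(1,0)}. The input vector is a product state (it equals (g,h) ↦ c(g)·d(h) with c(0) = c(1) = 1, d(0) = 0, d(1) = 1), while the output vector e_{(0,1)} + e_{(1,0)} admits no product decomposition: there exist no functions c, d : ℤ/2 → ℂ with (e_{(0,1)} + e_{(1,0)})(g,h) = c(g)·d(h) for all g, h. -/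
/-!
A product function `(x, y) ↦ c x * d y` has all its `2 × 2` minors
`f (a, b) * f (a', b') - f (a, b') * f (a', b)` equal to zero. The frame change sends
`e_{(0,1)} + e_{(1,1)} = 1 ⊗ e_1` to `e_{(0,1)} + e_{(1,0)}`, whose minor at the rows and
columns `0, 1` is `0 * 0 - 1 * 1 ≠ 0`.
-/

/-- Standard basis vector `e_p` of the space of functions `(ℤ/2) × (ℤ/2) → ℂ`. -/
def basis2 (p : ZMod 2 × ZMod 2) : ZMod 2 × ZMod 2 → ℂ :=
  fun q => if q = p then 1 else 0

theorem not_exists_mul_apply_of_mul_ne {α β R : Type*} [CommSemigroup R] (f : α × β → R)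
    {a a' : α} {b b' : β} (hf : f (a, b) * f (a', b') ≠ f (a, b') * f (a', b)) :
    ¬ ∃ (c : α → R) (d : β → R), ∀ x y, f (x, y) = c x * d y := by
  rintro ⟨c, d, hcd⟩
  apply hf
  simp only [hcd]
  ac_rfl

theorem basis2_zero_add_basis2_one (h : ZMod 2) :
    basis2 (0, h) + basis2 (1, h) = fun p => if p.2 = h then 1 else 0 := by
  funext ⟨g, k⟩
  obtain rfl | rfl : g = 0 ∨ g = 1 := by decide +revert
  all_goals simp [basis2]

/-- Frame-dependence of entanglement for `ℤ/2`: the change of quantum reference frame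
`U e_{(g,h)} = e_{(−g, h−g)}` maps the product state `e_{(0,1)} + e_{(1,1)}` to
`e_{(0,1)} + e_{(1,0)}`, which admits no product decomposition. -/
theorem entanglement_frame_dependence
    (U : (ZMod 2 × ZMod 2 → ℂ) →ₗ[ℂ] (ZMod 2 × ZMod 2 → ℂ))
    (hU : ∀ g h : ZMod 2, U (basis2 (g, h)) = basis2 (-g, h - g)) :
    (U (basis2 (0, 1) + basis2 (1, 1)) = basis2 (0, 1) + basis2 (1, 0)) ∧
      (∃ c d : ZMod 2 → ℂ,
        (c 0 = 1 ∧ c 1 = 1 ∧ d 0 = 0 ∧ d 1 = 1) ∧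
          (basis2 (0, 1) + basis2 (1, 1)) = fun p => c p.1 * d p.2) ∧
      ¬ ∃ c d : ZMod 2 → ℂ,
          ∀ g h : ZMod 2, (basis2 (0, 1) + basis2 (1, 0)) (g, h) = c g * d h := by
  refine ⟨?_, ?_, ?_⟩
  · -- `(-0, 1 - 0) = (0, 1)` and `(-1, 1 - 1) = (1, 0)` hold by computation in `ZMod 2`.
    rw [map_add, hU, hU]
    rfl
  · refine ⟨fun _ => 1, fun h => if h = 1 then 1 else 0, ⟨rfl, rfl, rfl, rfl⟩, ?_⟩
    rw [basis2_zero_add_basis2_one]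
    exact funext fun p => (one_mul _).symm
  · refine not_exists_mul_apply_of_mul_ne _ (a := 0) (a' := 1) (b := 0) (b' := 1) ?_
    simp [basis2]
end

section
/- Wigner's friend with an additional reference system: Let V be the complex vector space of functions (ℤ/2) × (ℤ/2) × (ℤ/2) → ℂ with standard basis e_{(r,f,s)}, and let U be the linear map determined on the basis by U e_{(r,f,s)} = e_{(f, r−f, s−f)} (the change of quantum reference frame from Wigner W to the friend F for the group ℤ/2, where the slots hold the states of the reference system R, the friend F, and the system S, and after the change the slots hold W, R, S). Then for all α, β ∈ ℂ, U(α·e_{(0,0,0)} + β·e_{(0,1,1)}) = α·e_{(0,0,0)} + β·e_{(1,1,0)}; moreover the output factorizes as w(a, b, c) = m(a, b)·d(c) with m(0,0) = α, m(1,1) = β, m(0,1) = m(1,0) = 0, d(0) = 1, d(1) = 0. -/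
/-! Over any group, the frame change sends `|0⟩_R |g⟩_F |g⟩_S` to `|g⟩_W |-g⟩_R |0⟩_S`: the
system's correlation with the friend is traded for one between Wigner and `R`. In `ℤ/2`, `-1 = 1`,
so by linearity the output is the product of `α|00⟩ + β|11⟩` on `W R` with `|0⟩_S`. -/

def basis3 (p : ZMod 2 × ZMod 2 × ZMod 2) : ZMod 2 × ZMod 2 × ZMod 2 → ℂ :=
  fun q => if q = p then 1 else 0

lemma basis3_eq_single (p : ZMod 2 × ZMod 2 × ZMod 2) : basis3 p = Pi.single p 1 := by
  funext q
  simp [basis3, Pi.single_apply]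

section FrameChange

variable {G R : Type*} [AddGroup G] [DecidableEq G] [Semiring R]

lemma frameChange_single_zero_diag (U : (G × G × G → R) →ₗ[R] (G × G × G → R))
    (hU : ∀ r f s : G, U (Pi.single (r, f, s) 1) = Pi.single (f, r - f, s - f) 1)
    (g : G) (x : R) : U (Pi.single (0, g, g) x) = Pi.single (g, -g, 0) x := by
  rw [← mul_one x, ← smul_eq_mul, Pi.single_smul', Pi.single_smul', map_smul, hU, zero_sub,
    sub_self]

end FrameChange

section TensorState

variable {α β γ R : Type*} [NonUnitalNonAssocSemiring R]

def tensorState (m : α × β → R) (d : γ → R) : α × β × γ → R :=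
  fun p => m (p.1, p.2.1) * d p.2.2

lemma tensorState_add_left (m m' : α × β → R) (d : γ → R) :
    tensorState (m + m') d = tensorState m d + tensorState m' d :=
  funext fun _ => add_mul _ _ _

lemma tensorState_single [DecidableEq α] [DecidableEq β] [DecidableEq γ]
    (a : α) (b : β) (c : γ) (x y : R) :
    tensorState (Pi.single (a, b) x) (Pi.single c y) = Pi.single (a, b, c) (x * y) := by
  funext ⟨a', b', c'⟩
  by_cases hab : (a', b') = (a, b) <;> by_cases hc : c' = c <;>
    simp_all [tensorState]

end TensorState

/-- Wigner's friend with an additional reference system: if `U` is the linear map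
determined on the basis by `U e_{(r,f,s)} = e_{(f, r−f, s−f)}`, then the state
`α e_{(0,0,0)} + β e_{(0,1,1)}` Wigner assigns is mapped to
`α e_{(0,0,0)} + β e_{(1,1,0)}`, which factorizes as `w(a,b,c) = m(a,b)·d(c)` with
`m(0,0) = α, m(1,1) = β, m(0,1) = m(1,0) = 0, d(0) = 1, d(1) = 0`. -/
theorem wigner_friend_extra_reference
    (U : (ZMod 2 × ZMod 2 × ZMod 2 → ℂ) →ₗ[ℂ] (ZMod 2 × ZMod 2 × ZMod 2 → ℂ))
    (hU : ∀ r f s : ZMod 2, U (basis3 (r, f, s)) = basis3 (f, r - f, s - f)) :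
    ∀ α β : ℂ,
      U (α • basis3 (0, 0, 0) + β • basis3 (0, 1, 1)) =
          α • basis3 (0, 0, 0) + β • basis3 (1, 1, 0) ∧
        ∃ (m : ZMod 2 × ZMod 2 → ℂ) (d : ZMod 2 → ℂ),
          (m (0, 0) = α ∧ m (1, 1) = β ∧ m (0, 1) = 0 ∧ m (1, 0) = 0 ∧
              d 0 = 1 ∧ d 1 = 0) ∧
            (α • basis3 (0, 0, 0) + β • basis3 (1, 1, 0)) =
              fun p => m (p.1, p.2.1) * d p.2.2 := by
  intro α β
  simp only [basis3_eq_single, ← Pi.single_smul', smul_eq_mul, mul_one] at hU ⊢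
  refine ⟨?_, Pi.single (0, 0) α + Pi.single (1, 1) β, Pi.single 0 1, ?_, ?_⟩
  · rw [map_add, frameChange_single_zero_diag U hU, frameChange_single_zero_diag U hU, neg_zero,
      CharTwo.neg_eq]
  · simp
  · change _ = tensorState _ _
    rw [tensorState_add_left, tensorState_single, tensorState_single, mul_one, mul_one]
end
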